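/- arXiv:math/0304356 — 4 statements merged into one kernel-verified Lean document; each statement's English description precedes it below -/
import Mathlib

section
/- Let p_1 and p_2 be distinct primes and s a nonnegative integer. Then, as an identity of complex numbers, W(s, (p_1, p_2)) = (1/(p_1 p_2)) (s + (p_1 + p_2)/2) + (1/p_1) ∑_{ρ} ρ^{−s}/(1 − ρ^{p_2}) + (1/p_2) ∑_{σ} σ^{−s}/(1 − σ^{p_1}), where the first sum runs over all p_1-th roots of unity ρ ≠ 1 and the second sum runs over all p_2-th roots of unity σ ≠ 1. -/
/-!
Let `U ∈ [1, p₁]` and `V ∈ [1, p₂]` be the residues with `p₁ ∣ p₂ U + s` and `p₂ ∣ p₁ V + s`, and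
put `M = (s + p₂ U + p₁ V) / (p₁ p₂)`. The solutions of `a p₁ + b p₂ = s` are exactly
`a = c p₂ - V`, `b = d p₁ - U` with `c, d ≥ 1` and `c + d = M`, so `W = M - 1`.

On the other side, `F(t) = ∑_{ρ^{p₁} = 1, ρ ≠ 1} ρ^t / (1 - ρ^{p₂})` is `p₁`-periodic and
`F(t) - F(t + p₂) = ∑_{ρ ≠ 1} ρ^t`, which is `p₁ - 1` or `-1` according as `p₁ ∣ t` or not.
Together with `F(0) = (p₁ - 1) / 2`, obtained by pairing `ρ` with `ρ⁻¹`, this gives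
`F(-s) = F(U p₂) = U - (p₁ + 1) / 2`, and symmetrically for the second sum. Substituting both
values, the right-hand side becomes `(s + p₂ U + p₁ V) / (p₁ p₂) - 1 = M - 1`.
-/

/-- The restricted partition function `W s d`: the number of tuples
`(x_1, …, x_m)` of nonnegative integers with `x_1 d_1 + ⋯ + x_m d_m = s`. -/
noncomputable def W (s : ℕ) (d : List ℕ) : ℕ :=
  Set.ncard {x : Fin d.length → ℕ | ∑ i, x i * d.get i = s}

open Polynomial Finset

theorem exists_dvd_mul_add_of_coprime {p q : ℕ} (hp : 0 < p) (hpq : p.Coprime q) (s : ℕ) :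
    ∃ U, 1 ≤ U ∧ U ≤ p ∧ p ∣ q * U + s := by
  have : NeZero p := ⟨hp.ne'⟩
  have hlt := ((s : ZMod p) * (q : ZMod p)⁻¹).val_lt
  refine ⟨p - ((s : ZMod p) * (q : ZMod p)⁻¹).val, by omega, Nat.sub_le _ _, ?_⟩
  rw [← ZMod.natCast_eq_zero_iff, Nat.cast_add, Nat.cast_mul, Nat.cast_sub hlt.le,
    ZMod.natCast_self, ZMod.natCast_zmod_val]
  linear_combination (-(s : ZMod p)) * ZMod.coe_mul_inv_eq_one q hpq.symm

section RootsOfUnity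

variable {p : ℕ}

theorem pow_ne_one_of_mem_nthRootsFinset_erase_one {R : Type*} [CommRing R] [IsDomain R]
    [DecidableEq R] {q : ℕ} (hp : 0 < p) (hpq : p.Coprime q) {ρ : R}
    (hρ : ρ ∈ (nthRootsFinset p (1 : R)).erase 1) : ρ ^ q ≠ 1 := fun hq =>
  ne_of_mem_erase hρ ((pow_eq_one_iff_of_coprime hpq).mp
    ⟨(mem_nthRootsFinset hp 1).mp (mem_of_mem_erase hρ), hq⟩)

variable {K : Type*} [Field K] {ζ : K}

theorem sum_nthRootsFinset_zpow_eq_zero (hp : 0 < p) (hζ : IsPrimitiveRoot ζ p) {t : ℤ}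
    (ht : ¬ (p : ℤ) ∣ t) : ∑ ρ ∈ nthRootsFinset p (1 : K), ρ ^ t = 0 := by
  have hζ0 : ζ ≠ 0 := hζ.ne_zero hp.ne'
  have hmem : ∀ {a ρ : K}, a ^ p = 1 → ρ ∈ nthRootsFinset p (1 : K) →
      a * ρ ∈ nthRootsFinset p (1 : K) := fun ha hρ => by
    rw [mem_nthRootsFinset hp] at hρ ⊢
    rw [mul_pow, ha, hρ, one_mul]
  have hrotate : ∑ ρ ∈ nthRootsFinset p (1 : K), ρ ^ t
      = ζ ^ t * ∑ ρ ∈ nthRootsFinset p (1 : K), ρ ^ t := by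
    rw [mul_sum]
    exact sum_nbij' (ζ⁻¹ * ·) (ζ * ·)
      (fun ρ => hmem (by rw [inv_pow, hζ.pow_eq_one, inv_one])) (fun ρ => hmem hζ.pow_eq_one)
      (fun ρ _ => by simp [hζ0]) (fun ρ _ => by simp [hζ0])
      (fun ρ _ => by rw [← mul_zpow, mul_inv_cancel_left₀ hζ0])
  have hζt : ζ ^ t ≠ 1 := mt (hζ.zpow_eq_one_iff_dvd t).mp ht
  rw [← sub_eq_zero, ← one_sub_mul] at hrotate
  exact (mul_eq_zero.mp hrotate).resolve_left (sub_ne_zero.mpr hζt.symm)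

theorem sum_nthRootsFinset_erase_one_zpow [DecidableEq K] (hp : 0 < p)
    (hζ : IsPrimitiveRoot ζ p) {t : ℤ} (ht : ¬ (p : ℤ) ∣ t) :
    ∑ ρ ∈ (nthRootsFinset p (1 : K)).erase 1, ρ ^ t = -1 := by
  rw [sum_erase_eq_sub (one_mem_nthRootsFinset hp), sum_nthRootsFinset_zpow_eq_zero hp hζ ht,
    one_zpow, zero_sub]

theorem card_nthRootsFinset_erase_one [DecidableEq K] (hp : 0 < p) (hζ : IsPrimitiveRoot ζ p) :
    (((nthRootsFinset p (1 : K)).erase 1).card : K) = p - 1 := by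
  rw [card_erase_of_mem (one_mem_nthRootsFinset hp), hζ.card_nthRootsFinset, Nat.cast_sub hp,
    Nat.cast_one]

end RootsOfUnity

/-- Beck–Robins' Fourier–Dedekind sum `s_t(q; p)`, without their factor `1 / p`. -/
noncomputable def fourierDedekindSum (p q : ℕ) (t : ℤ) : ℂ :=
  ∑ ρ ∈ (nthRootsFinset p (1 : ℂ)).erase 1, ρ ^ t / (1 - ρ ^ q)

section FourierDedekindSum

variable {p q : ℕ}

theorem fourierDedekindSum_periodic (hp : 0 < p) :
    Function.Periodic (fourierDedekindSum p q) p := fun t => by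
  refine sum_congr rfl fun ρ hρ => ?_
  have hρp : ρ ^ p = 1 := (mem_nthRootsFinset hp 1).mp (mem_of_mem_erase hρ)
  have hρ0 : ρ ≠ 0 := ne_zero_of_mem_nthRootsFinset one_ne_zero (mem_of_mem_erase hρ)
  rw [zpow_add₀ hρ0, zpow_natCast, hρp, mul_one]

theorem fourierDedekindSum_sub_add (hp : 0 < p) (hpq : p.Coprime q) (t : ℤ) :
    fourierDedekindSum p q t - fourierDedekindSum p q (t + q) =
      ∑ ρ ∈ (nthRootsFinset p (1 : ℂ)).erase 1, ρ ^ t := by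
  rw [fourierDedekindSum, fourierDedekindSum, ← sum_sub_distrib]
  refine sum_congr rfl fun ρ hρ => ?_
  have hρ0 : ρ ≠ 0 := ne_zero_of_mem_nthRootsFinset one_ne_zero (mem_of_mem_erase hρ)
  have hρq : 1 - ρ ^ q ≠ 0 :=
    sub_ne_zero.mpr (pow_ne_one_of_mem_nthRootsFinset_erase_one hp hpq hρ).symm
  rw [zpow_add₀ hρ0, zpow_natCast]
  field_simp

theorem fourierDedekindSum_zero (hp : 0 < p) (hpq : p.Coprime q) :
    fourierDedekindSum p q 0 = ((p : ℂ) - 1) / 2 := by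
  set R := (nthRootsFinset p (1 : ℂ)).erase 1
  have hinv : ∀ ρ ∈ R, ρ⁻¹ ∈ R := fun ρ hρ => by
    obtain ⟨hρ1, hρ⟩ := mem_erase.mp hρ
    rw [mem_nthRootsFinset hp] at hρ
    rw [mem_erase, mem_nthRootsFinset hp]
    exact ⟨inv_ne_one.mpr hρ1, by rw [inv_pow, hρ, inv_one]⟩
  have hreflect : fourierDedekindSum p q 0 = ∑ ρ ∈ R, 1 / (1 - ρ⁻¹ ^ q) := by
    simp only [fourierDedekindSum, zpow_zero]
    exact sum_nbij' (·⁻¹) (·⁻¹) hinv hinv (fun ρ _ => inv_inv ρ) (fun ρ _ => inv_inv ρ)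
      (fun ρ _ => by rw [inv_inv])
  have hpair : ∀ ρ ∈ R, 1 / (1 - ρ ^ q) + 1 / (1 - ρ⁻¹ ^ q) = 1 := fun ρ hρ => by
    have hρ0 : ρ ^ q ≠ 0 :=
      pow_ne_zero _ (ne_zero_of_mem_nthRootsFinset one_ne_zero (mem_of_mem_erase hρ))
    have hρq : ρ ^ q - 1 ≠ 0 :=
      sub_ne_zero.mpr (pow_ne_one_of_mem_nthRootsFinset_erase_one hp hpq hρ)
    have hρq' : 1 - ρ ^ q ≠ 0 :=
      sub_ne_zero.mpr (pow_ne_one_of_mem_nthRootsFinset_erase_one hp hpq hρ).symm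
    rw [inv_pow]
    field_simp
    ring
  have h2 : 2 * fourierDedekindSum p q 0 = p - 1 := by
    rw [two_mul]
    nth_rewrite 2 [hreflect]
    rw [fourierDedekindSum, ← sum_add_distrib,
      ← card_nthRootsFinset_erase_one hp (Complex.isPrimitiveRoot_exp p hp.ne'), cast_card]
    simp only [zpow_zero]
    exact sum_congr rfl hpair
  linear_combination h2 / 2

theorem fourierDedekindSum_natCast_mul (hp : 0 < p) (hpq : p.Coprime q) {k : ℕ} (hk : 1 ≤ k)
    (hkp : k ≤ p) : fourierDedekindSum p q (k * q) = k - ((p : ℂ) + 1) / 2 := by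
  have hζ := Complex.isPrimitiveRoot_exp p hp.ne'
  induction k, hk using Nat.le_induction with
  | base =>
    have h := fourierDedekindSum_sub_add hp hpq 0
    rw [zero_add, fourierDedekindSum_zero hp hpq, sum_congr rfl fun ρ _ => zpow_zero ρ,
      ← cast_card, card_nthRootsFinset_erase_one hp hζ] at h
    rw [Nat.cast_one, Nat.cast_one, one_mul]
    linear_combination -h
  | succ k hk ih =>
    have hndvd : ¬ (p : ℤ) ∣ k * q := by
      rw [← Nat.cast_mul, Int.natCast_dvd_natCast]
      exact fun h => absurd (Nat.le_of_dvd hk (hpq.dvd_of_dvd_mul_right h)) (by omega)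
    have h := fourierDedekindSum_sub_add hp hpq (k * q)
    rw [sum_nthRootsFinset_erase_one_zpow hp hζ hndvd, ih (by omega)] at h
    rw [Nat.cast_succ, add_one_mul, Nat.cast_succ]
    linear_combination -h

theorem fourierDedekindSum_neg_natCast (hp : 0 < p) (hpq : p.Coprime q) {s U : ℕ} (hU : 1 ≤ U)
    (hUp : U ≤ p) (hUs : p ∣ q * U + s) :
    fourierDedekindSum p q (-s) = U - ((p : ℂ) + 1) / 2 := by
  obtain ⟨m, hm⟩ := hUs
  have hm' : (q : ℤ) * U + s = p * m := by exact_mod_cast hm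
  have hs : -(s : ℤ) = U * q - m * p := by linear_combination -hm'
  rw [hs, (fourierDedekindSum_periodic hp).sub_nat_mul_eq,
    fourierDedekindSum_natCast_mul hp hpq hU hUp]

end FourierDedekindSum

theorem W_pair (p q s : ℕ) : W s [p, q] = {x : Fin 2 → ℕ | x 0 * p + x 1 * q = s}.ncard := by
  simp [W, Fin.sum_univ_two]

section Counting

variable {p q s U V M : ℕ}

theorem dvd_add_of_mul_add_mul_eq (hpq : p.Coprime q) (hV : q ∣ p * V + s) {a b : ℕ}
    (hab : a * p + b * q = s) : q ∣ a + V := by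
  have h : p * (a + V) + b * q = p * V + s := by rw [← hab]; ring
  rw [← h, Nat.dvd_add_left (dvd_mul_left q b)] at hV
  exact hpq.symm.dvd_of_dvd_mul_left hV

theorem setOf_mul_add_mul_eq_eq_image (hpq : p.Coprime q) (hU : 1 ≤ U) (hUp : U ≤ p)
    (hV : 1 ≤ V) (hVq : V ≤ q) (hUs : p ∣ q * U + s) (hVs : q ∣ p * V + s)
    (hM : s + q * U + p * V = M * (p * q)) :
    {x : Fin 2 → ℕ | x 0 * p + x 1 * q = s} =
      (Ioo 0 M).image (fun c => ![c * q - V, (M - c) * p - U]) := by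
  ext x
  simp only [Set.mem_ofPred_eq, coe_image, Set.mem_image, mem_coe, mem_Ioo]
  constructor
  · intro hx
    obtain ⟨c, hc⟩ := dvd_add_of_mul_add_mul_eq hpq hVs hx
    obtain ⟨d, hd⟩ := dvd_add_of_mul_add_mul_eq hpq.symm hUs (by rw [← hx, add_comm])
    have hcd : M = c + d := by
      refine Nat.eq_of_mul_eq_mul_right (Nat.mul_pos (by omega : 0 < p) (by omega : 0 < q)) ?_
      rw [← hM, ← hx]
      zify at hc hd ⊢
      linear_combination p * hc + q * hd
    have hc0 : 0 < c := Nat.pos_of_ne_zero (by rintro rfl; omega)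
    have hd0 : 0 < d := Nat.pos_of_ne_zero (by rintro rfl; omega)
    refine ⟨c, ⟨hc0, by omega⟩, ?_⟩
    ext i
    fin_cases i
    · change c * q - V = x 0
      rw [mul_comm, ← hc, Nat.add_sub_cancel]
    · change (M - c) * p - U = x 1
      rw [hcd, Nat.add_sub_cancel_left, mul_comm, ← hd, Nat.add_sub_cancel]
  · rintro ⟨c, ⟨hc, hcM⟩, rfl⟩
    obtain ⟨d, rfl⟩ : ∃ d, M = c + d := ⟨M - c, by omega⟩
    have hcV : V ≤ c * q := hVq.trans (Nat.le_mul_of_pos_left q hc)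
    have hdU : U ≤ d * p := hUp.trans (Nat.le_mul_of_pos_left p (by omega))
    simp only [Matrix.cons_val_zero, Matrix.cons_val_one, Nat.add_sub_cancel_left]
    zify [hcV, hdU] at hM ⊢
    linear_combination -hM

theorem W_pair_add_one_mul (hpq : p.Coprime q) (hU : 1 ≤ U) (hUp : U ≤ p)
    (hV : 1 ≤ V) (hVq : V ≤ q) (hUs : p ∣ q * U + s) (hVs : q ∣ p * V + s) :
    (W s [p, q] + 1) * (p * q) = s + q * U + p * V := by
  obtain ⟨M, hM⟩ : p * q ∣ s + q * U + p * V := hpq.mul_dvd_of_dvd_of_dvd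
    (by rw [add_comm s]; exact dvd_add hUs (dvd_mul_right p V))
    (by rw [add_right_comm, add_comm s]; exact dvd_add hVs (dvd_mul_right q U))
  rw [mul_comm (p * q)] at hM
  have hinj : Set.InjOn (fun c => ![c * q - V, (M - c) * p - U]) (Ioo 0 M) := by
    intro c hc c' hc' h
    have h0 := congrFun h 0
    simp only [Matrix.cons_val_zero] at h0
    have hcq : V ≤ c * q := hVq.trans (Nat.le_mul_of_pos_left q (mem_Ioo.mp hc).1)
    have hc'q : V ≤ c' * q := hVq.trans (Nat.le_mul_of_pos_left q (mem_Ioo.mp hc').1)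
    exact Nat.eq_of_mul_eq_mul_right (by omega : 0 < q) (by omega)
  have hpV : 0 < p * V := Nat.mul_pos (by omega) hV
  have hM0 : 0 < M := Nat.pos_of_ne_zero (by rintro rfl; rw [zero_mul] at hM; omega)
  rw [W_pair, setOf_mul_add_mul_eq_eq_image hpq hU hUp hV hVq hUs hVs hM, Set.ncard_coe_finset,
    card_image_of_injOn hinj, Nat.card_Ioo, hM]
  congr 1
  omega

end Counting

theorem restrictedPartition_two_primes_explicit
    (p₁ p₂ : ℕ) (hp₁ : p₁.Prime) (hp₂ : p₂.Prime) (hne : p₁ ≠ p₂) (s : ℕ) :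
    (W s [p₁, p₂] : ℂ) =
      1 / ((p₁ : ℂ) * p₂) * ((s : ℂ) + ((p₁ : ℂ) + p₂) / 2) +
      (1 / (p₁ : ℂ)) *
        ∑ ρ ∈ (Polynomial.nthRootsFinset p₁ (1 : ℂ)).erase 1, ρ ^ (-(s : ℤ)) / (1 - ρ ^ p₂) +
      (1 / (p₂ : ℂ)) *
        ∑ σ ∈ (Polynomial.nthRootsFinset p₂ (1 : ℂ)).erase 1, σ ^ (-(s : ℤ)) / (1 - σ ^ p₁) := by
  have hpq : p₁.Coprime p₂ := (Nat.coprime_primes hp₁ hp₂).mpr hne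
  obtain ⟨U, hU, hUp, hUs⟩ := exists_dvd_mul_add_of_coprime hp₁.pos hpq s
  obtain ⟨V, hV, hVq, hVs⟩ := exists_dvd_mul_add_of_coprime hp₂.pos hpq.symm s
  have hW : ((W s [p₁, p₂] : ℂ) + 1) * (p₁ * p₂) = s + p₂ * U + p₁ * V := by
    exact_mod_cast W_pair_add_one_mul hpq hU hUp hV hVq hUs hVs
  have h₁ := fourierDedekindSum_neg_natCast hp₁.pos hpq hU hUp hUs
  have h₂ := fourierDedekindSum_neg_natCast hp₂.pos hpq.symm hV hVq hVs
  rw [fourierDedekindSum] at h₁ h₂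
  rw [h₁, h₂]
  have hp₁0 : (p₁ : ℂ) ≠ 0 := Nat.cast_ne_zero.mpr hp₁.ne_zero
  have hp₂0 : (p₂ : ℂ) ≠ 0 := Nat.cast_ne_zero.mpr hp₂.ne_zero
  field_simp
  linear_combination 2 * hW
end

section
/- Let p_1 and p_2 be distinct primes, let a be a nonnegative integer, and let b be an integer with 0 ≤ b < p_1 p_2. Then W(a p_1 p_2 + b, (p_1, p_2)) = a + W(b, (p_1, p_2)). -/
/-!
For coprime `p, q > 0`, the representations `x p + y q = s + p q` with `x ≥ q` are exactly the
representations of `s` with `x` shifted by `q`. Among those with `x < q` there is exactly one: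
`x p ≡ s [MOD q]` pins down `x` modulo `q`, and `x p ≤ p q` leaves room for `y ≥ 0`.
So adding `p q` to `s` adds one representation, and induction on `a` gives the theorem.
-/

namespace RestrictedPartition

def twoPartReps (p q s : ℕ) : Set (ℕ × ℕ) := {xy | xy.1 * p + xy.2 * q = s}

variable {p q : ℕ}

lemma W_pair_eq_ncard_twoPartReps (p q s : ℕ) : W s [p, q] = (twoPartReps p q s).ncard :=
  Set.ncard_congr' <| (piFinTwoEquiv fun _ => ℕ).subtypeEquiv fun x => by
    simp [twoPartReps, Fin.sum_univ_two]

lemma twoPartReps_finite (hp : 0 < p) (hq : 0 < q) (s : ℕ) : (twoPartReps p q s).Finite := by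
  refine ((Set.finite_Iic s).prod (Set.finite_Iic s)).subset fun xy hxy => ?_
  simp only [twoPartReps, Set.mem_ofPred_eq] at hxy
  exact ⟨by simp only [Set.mem_Iic]; nlinarith, by simp only [Set.mem_Iic]; nlinarith⟩

lemma eq_of_mem_twoPartReps_of_fst_lt (hpq : p.Coprime q) {s : ℕ} {xy xy' : ℕ × ℕ}
    (h : xy ∈ twoPartReps p q s) (h' : xy' ∈ twoPartReps p q s) (hx : xy.1 < q)
    (hx' : xy'.1 < q) : xy = xy' := by
  obtain ⟨x, y⟩ := xy
  obtain ⟨x', y'⟩ := xy'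
  simp only [twoPartReps, Set.mem_ofPred_eq] at h h' hx hx'
  have hmod : x * p ≡ x' * p [MOD q] := by
    simpa only [Nat.ModEq, Nat.add_mul_mod_self_right] using congrArg (· % q) (h.trans h'.symm)
  have hxx : x = x' :=
    (Nat.ModEq.cancel_right_of_coprime (Nat.coprime_comm.mp hpq) hmod).eq_of_lt_of_lt hx hx'
  subst hxx
  have hyy : y * q = y' * q := by omega
  rw [Nat.eq_of_mul_eq_mul_right (by omega) hyy]

lemma exists_mem_twoPartReps_add_mul_fst_lt (hpq : p.Coprime q) (hq : 0 < q) (s : ℕ) :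
    ∃ xy ∈ twoPartReps p q (s + p * q), xy.1 < q := by
  obtain ⟨x, hxq, hx⟩ := Nat.exists_mul_mod_eq_of_coprime s hpq hq.ne'
  have hle : x * p ≤ s + p * q := by nlinarith
  have hmod : x * p ≡ s + p * q [MOD q] := by
    simpa only [Nat.ModEq, Nat.add_mul_mod_self_right, mul_comm x] using hx
  obtain ⟨y, hy⟩ := (Nat.modEq_iff_dvd' hle).mp hmod
  refine ⟨(x, y), ?_, hxq⟩
  simp only [twoPartReps, Set.mem_ofPred_eq]
  rw [mul_comm y, ← hy]
  omega

lemma ncard_twoPartReps_add_mul (hp : 0 < p) (hq : 0 < q) (hpq : p.Coprime q) (s : ℕ) :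
    (twoPartReps p q (s + p * q)).ncard = (twoPartReps p q s).ncard + 1 := by
  set small : Set (ℕ × ℕ) := {xy | xy.1 < q}
  have hsmall : (twoPartReps p q (s + p * q) ∩ small).ncard = 1 := by
    obtain ⟨xy, hxy, hxq⟩ := exists_mem_twoPartReps_add_mul_fst_lt hpq hq s
    rw [Set.ncard_eq_one]
    exact ⟨xy, Set.eq_singleton_iff_unique_mem.mpr ⟨⟨hxy, hxq⟩, fun xy' h' =>
      eq_of_mem_twoPartReps_of_fst_lt hpq h'.1 hxy h'.2 hxq⟩⟩
  have hlarge : twoPartReps p q (s + p * q) \ small =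
      Prod.map (· + q) id '' twoPartReps p q s := by
    ext ⟨x, y⟩
    simp only [twoPartReps, small, Set.mem_sdiff, Set.mem_ofPred_eq, not_lt, Set.mem_image,
      Prod.exists, Prod.map, id, Prod.mk.injEq]
    constructor
    · rintro ⟨hxy, hqx⟩
      obtain ⟨u, rfl⟩ := Nat.exists_eq_add_of_le' hqx
      exact ⟨u, y, by nlinarith, rfl, rfl⟩
    · rintro ⟨u, v, huv, rfl, rfl⟩
      exact ⟨by nlinarith, by omega⟩
  have hshift : (Prod.map (· + q) id : ℕ × ℕ → ℕ × ℕ).Injective :=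
    (add_left_injective q).prodMap Function.injective_id
  rw [← Set.ncard_inter_add_ncard_sdiff_eq_ncard _ small (twoPartReps_finite hp hq _), hsmall,
    hlarge, Set.ncard_image_of_injective _ hshift, add_comm]

lemma W_pair_add_mul (hp : 0 < p) (hq : 0 < q) (hpq : p.Coprime q) (s : ℕ) :
    W (s + p * q) [p, q] = W s [p, q] + 1 := by
  simp only [W_pair_eq_ncard_twoPartReps, ncard_twoPartReps_add_mul hp hq hpq]

end RestrictedPartition

open RestrictedPartition in
theorem restrictedPartition_two_primes_reduction_general
    (p₁ p₂ : ℕ) (hp₁ : p₁.Prime) (hp₂ : p₂.Prime) (hne : p₁ ≠ p₂)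
    (a b : ℕ) :
    W (a * p₁ * p₂ + b) [p₁, p₂] = a + W b [p₁, p₂] := by
  have hcop : p₁.Coprime p₂ := (Nat.coprime_primes hp₁ hp₂).mpr hne
  induction a with
  | zero => simp
  | succ a ih =>
    rw [show (a + 1) * p₁ * p₂ + b = a * p₁ * p₂ + b + p₁ * p₂ by ring,
      W_pair_add_mul hp₁.pos hp₂.pos hcop, ih]
    ring

theorem restrictedPartition_two_primes_reduction
    (p₁ p₂ : ℕ) (hp₁ : p₁.Prime) (hp₂ : p₂.Prime) (hne : p₁ ≠ p₂)
    (a b : ℕ) (hb : b < p₁ * p₂) :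
    W (a * p₁ * p₂ + b) [p₁, p₂] = a + W b [p₁, p₂] :=
  restrictedPartition_two_primes_reduction_general p₁ p₂ hp₁ hp₂ hne a b
end

section
/- Let d = (d_1, …, d_m) be a finite list of positive integers with m ≥ 2, and define the polynomial part of the partition function by W_1(s, d) = B_{m−1}^{(m)}(s + d_1 + ⋯ + d_m | d) / ((m−1)! · d_1 ⋯ d_m) for real s. Then W_1 satisfies the same basic recursion as the restricted partition function: W_1(s, (d_1, …, d_m)) − W_1(s − d_m, (d_1, …, d_m)) = W_1(s, (d_1, …, d_{m−1})) for all real s. -/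
/-- The factor `(k t)/(e^{k t} - 1)`, extended by its limiting value `1` at `t = 0`. -/
noncomputable def bernFactor (k : ℕ) (t : ℝ) : ℝ :=
  if t = 0 then 1 else (k : ℝ) * t / (Real.exp ((k : ℝ) * t) - 1)

/-- The Bernoulli polynomial of higher order `B_n^{(m)}(s | d)`, defined as the `n`-th
derivative at `t = 0` of `t ↦ e^{st} ∏_i (d_i t)/(e^{d_i t} - 1)`. -/
noncomputable def bernHO (d : List ℕ) (n : ℕ) (s : ℝ) : ℝ :=
  iteratedDeriv n (fun t => Real.exp (s * t) * (d.map fun k => bernFactor k t).prod) 0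

/-- The polynomial part `W₁(s, d)` of the restricted partition function:
`W₁(s, d) = B_{m-1}^{(m)}(s + d_1 + ⋯ + d_m | d) / ((m-1)! d_1 ⋯ d_m)`. -/
noncomputable def W₁ (d : List ℕ) (s : ℝ) : ℝ :=
  bernHO d (d.length - 1) (s + (d.sum : ℝ)) /
    (((d.length - 1).factorial : ℝ) * (d.prod : ℝ))


lemma expAux_analytic (k : ℕ) (x : ℝ) :
    AnalyticAt ℝ (fun t : ℝ => Real.exp ((k:ℝ) * t) - 1) x :=
  ((analyticAt_rexp).comp (analyticAt_const.mul analyticAt_id)).sub analyticAt_const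

lemma expAux_deriv (k : ℕ) :
    deriv (fun t : ℝ => Real.exp ((k:ℝ) * t) - 1) 0 = k := by
  have h : HasDerivAt (fun t : ℝ => Real.exp ((k:ℝ) * t) - 1) ((k:ℝ)) 0 := by
    have h1 : HasDerivAt (fun t : ℝ => (k:ℝ) * t) ((k:ℝ) * 1) 0 :=
      (hasDerivAt_id 0).const_mul _
    have h2 := (Real.hasDerivAt_exp ((k:ℝ) * 0)).comp 0 h1
    simpa using h2.sub_const 1
  exact h.deriv

lemma bernFactor_analyticAt {k : ℕ} (hk : 0 < k) (x : ℝ) :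
    AnalyticAt ℝ (bernFactor k) x := by
  rcases eq_or_ne x 0 with rfl | hx
  · set f : ℝ → ℝ := fun t => Real.exp ((k:ℝ) * t) - 1 with hf
    have hg : AnalyticAt ℝ (dslope f 0) 0 := by
      obtain ⟨p, hp⟩ := expAux_analytic k 0
      exact ⟨p.fslope, hp.has_fpower_series_dslope_fslope⟩
    have hg0 : dslope f 0 0 = (k:ℝ) := by
      rw [dslope_same]; exact expAux_deriv k
    have hkne : (k:ℝ) ≠ 0 := Nat.cast_ne_zero.mpr hk.ne'
    have heq : bernFactor k = fun t => (k:ℝ) * (dslope f 0 t)⁻¹ := by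
      funext t
      rcases eq_or_ne t 0 with rfl | ht
      · rw [show bernFactor k 0 = 1 from if_pos rfl, hg0, mul_inv_cancel₀ hkne]
      · rw [bernFactor, if_neg ht, dslope_of_ne f ht]
        have : slope f 0 t = f t / t := by
          rw [slope_def_field]; simp [hf, div_eq_mul_inv]
        rw [this]
        field_simp
        simp [hf]
    rw [heq]
    exact analyticAt_const.mul (hg.inv (by rw [hg0]; exact hkne))
  · have hne : Real.exp ((k:ℝ) * x) - 1 ≠ 0 := by
      intro h
      have : Real.exp ((k:ℝ) * x) = 1 := by linarith
      rw [Real.exp_eq_one_iff] at this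
      have hkne : (k:ℝ) ≠ 0 := Nat.cast_ne_zero.mpr hk.ne'
      rcases mul_eq_zero.mp this with h | h
      · exact hkne h
      · exact hx h
    have ha : AnalyticAt ℝ (fun t : ℝ => (k:ℝ) * t / (Real.exp ((k:ℝ) * t) - 1)) x :=
      (analyticAt_const.mul analyticAt_id).div (expAux_analytic k x) hne
    apply ha.congr
    filter_upwards [eventually_ne_nhds hx] with t ht
    rw [bernFactor, if_neg ht]


open scoped ContDiff

section helpers
variable {f g : ℝ → ℝ} {n : ℕ} {c x : ℝ}

lemma itd_sub (hf : ContDiff ℝ n f) (hg : ContDiff ℝ n g) (x : ℝ) :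
    iteratedDeriv n (fun t => f t - g t) x = iteratedDeriv n f x - iteratedDeriv n g x := by
  simp only [← iteratedDerivWithin_univ]
  exact iteratedDerivWithin_sub (Set.mem_univ x) uniqueDiffOn_univ hf.contDiffWithinAt hg.contDiffWithinAt

lemma itd_add (hf : ContDiff ℝ n f) (hg : ContDiff ℝ n g) (x : ℝ) :
    iteratedDeriv n (fun t => f t + g t) x = iteratedDeriv n f x + iteratedDeriv n g x := by
  simp only [← iteratedDerivWithin_univ]
  exact iteratedDerivWithin_add (Set.mem_univ x) uniqueDiffOn_univ hf.contDiffWithinAt hg.contDiffWithinAt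

lemma itd_cmul (hf : ContDiff ℝ n f) (c : ℝ) (x : ℝ) :
    iteratedDeriv n (fun t => c * f t) x = c * iteratedDeriv n f x := by
  simp only [← iteratedDerivWithin_univ]
  exact iteratedDerivWithin_const_mul (Set.mem_univ x) uniqueDiffOn_univ c hf.contDiffWithinAt

lemma itd_id_mul (n : ℕ) (H : ℝ → ℝ) (hH : ContDiff ℝ ∞ H) :
    iteratedDeriv n (fun t => t * H t) = fun x =>
      (n : ℝ) * iteratedDeriv (n - 1) H x + x * iteratedDeriv n H x := by
  induction n generalizing H with
  | zero => funext x; simp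
  | succ n ih =>
    obtain ⟨hdiff, hH'⟩ := contDiff_infty_iff_deriv.mp hH
    have hd : deriv (fun t => t * H t) = fun x => H x + x * deriv H x := by
      funext x
      rw [deriv_fun_mul (c := fun t => t) differentiableAt_id (hdiff x)]
      simp [mul_comm]
    rw [iteratedDeriv_succ', hd]
    funext x
    have hxH' : ContDiff ℝ ∞ (fun t : ℝ => t * deriv H t) :=
      contDiff_id.mul hH'
    rw [itd_add (hH.of_le (WithTop.coe_le_coe.mpr le_top))
      (hxH'.of_le (WithTop.coe_le_coe.mpr le_top)) x,
      congrFun (ih (deriv H) hH') x]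
    have h2 : iteratedDeriv n (deriv H) = iteratedDeriv (n + 1) H :=
      (iteratedDeriv_succ').symm
    rcases n with _ | m
    · simp [h2]
    · have h1 : iteratedDeriv (m + 1 - 1) (deriv H) = iteratedDeriv (m + 1) H := by
        simp only [Nat.add_sub_cancel]
        exact (iteratedDeriv_succ').symm
      rw [h1, h2]
      simp only [Nat.add_sub_cancel]
      push_cast
      ring
end helpers


open Real Topology Filter
open scoped ContDiff

lemma prod_analytic (d : List ℕ) (hd : ∀ k ∈ d, 0 < k) (x : ℝ) :
    AnalyticAt ℝ (fun t => (d.map fun k => bernFactor k t).prod) x := by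
  induction d with
  | nil => simpa using analyticAt_const (v := (1:ℝ)) (x := x)
  | cons a l ih =>
    simp only [List.map_cons, List.prod_cons]
    exact (bernFactor_analyticAt (hd a (by simp)) x).mul
      (ih (fun k hk => hd k (by simp [hk])))

lemma Phi_analytic (c : ℝ) (d : List ℕ) (hd : ∀ k ∈ d, 0 < k) (x : ℝ) :
    AnalyticAt ℝ (fun t => Real.exp (c * t) * (d.map fun k => bernFactor k t).prod) x :=
  (analyticAt_rexp.comp (analyticAt_const.mul analyticAt_id)).mul (prod_analytic d hd x)

lemma Phi_contDiff (c : ℝ) (d : List ℕ) (hd : ∀ k ∈ d, 0 < k) (n : WithTop ℕ∞) :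
    ContDiff ℝ n (fun t => Real.exp (c * t) * (d.map fun k => bernFactor k t).prod) :=
  contDiff_iff_contDiffAt.mpr fun x => (Phi_analytic c d hd x).contDiffAt

lemma bernFactor_key {dm : ℕ} (hdm : 0 < dm) (c t : ℝ) :
    (Real.exp ((c + dm) * t) - Real.exp (c * t)) * bernFactor dm t
      = (dm : ℝ) * t * Real.exp (c * t) := by
  rcases eq_or_ne t 0 with rfl | ht
  · simp [bernFactor]
  · rw [bernFactor, if_neg ht]
    have hkne : (dm:ℝ) ≠ 0 := Nat.cast_ne_zero.mpr hdm.ne'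
    have hne : Real.exp ((dm:ℝ) * t) - 1 ≠ 0 := by
      intro h
      have h1 : Real.exp ((dm:ℝ) * t) = 1 := by linarith
      rw [Real.exp_eq_one_iff] at h1
      rcases mul_eq_zero.mp h1 with h2 | h2
      · exact hkne h2
      · exact ht h2
    have hsplitexp : Real.exp ((c + dm) * t) = Real.exp (c * t) * Real.exp ((dm:ℝ) * t) := by
      rw [← Real.exp_add]; ring_nf
    rw [hsplitexp]
    rw [mul_div_assoc', div_eq_iff hne]
    ring

theorem W₁_recursion
    (d : List ℕ) (hd : ∀ x ∈ d, 0 < x) (hne : d ≠ []) (hm : 2 ≤ d.length) (s : ℝ) :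
    W₁ d s - W₁ d (s - (d.getLast hne : ℝ)) = W₁ d.dropLast s := by
  set d' := d.dropLast with hd'def
  set dm := d.getLast hne with hdmdef
  have hsplit : d' ++ [dm] = d := List.dropLast_append_getLast hne
  have hdm : 0 < dm := hd _ (List.getLast_mem hne)
  have hd' : ∀ k ∈ d', 0 < k := fun k hk => hd k ((List.dropLast_sublist d).subset hk)
  have hlen : d.length = d'.length + 1 := by rw [← hsplit]; simp
  obtain ⟨n', hn'⟩ : ∃ n', d'.length = n' + 1 := by
    rcases Nat.exists_eq_add_of_le hm with ⟨j, hj⟩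
    exact ⟨j, by omega⟩
  have hsum : d.sum = d'.sum + dm := by rw [← hsplit]; simp
  have hprod : d.prod = d'.prod * dm := by rw [← hsplit]; simp
  set c : ℝ := s + (d'.sum : ℝ) with hcdef
  -- the key pointwise identity
  have key : ∀ t : ℝ,
      Real.exp ((s + (d.sum : ℝ)) * t) * ((d.map fun k => bernFactor k t).prod)
        - Real.exp ((s - (dm : ℝ) + (d.sum : ℝ)) * t) * ((d.map fun k => bernFactor k t).prod)
      = (dm : ℝ) * (t * (Real.exp (c * t) * ((d'.map fun k => bernFactor k t).prod))) := by
    intro t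
    have hP : ((d.map fun k => bernFactor k t).prod)
        = ((d'.map fun k => bernFactor k t).prod) * bernFactor dm t := by
      rw [← hsplit]; simp
    have hc1 : s + (d.sum : ℝ) = c + (dm : ℝ) := by rw [hsum, Nat.cast_add]; ring
    have hc2 : s - (dm : ℝ) + (d.sum : ℝ) = c := by rw [hsum, Nat.cast_add]; ring
    rw [hP, hc1, hc2]
    have h := bernFactor_key hdm c t
    linear_combination ((d'.map fun k => bernFactor k t).prod) * h
  -- the derivative computation
  set n : ℕ := d.length - 1 with hndef
  have hnn : n = n' + 1 := by omega
  have hH : ContDiff ℝ ∞ (fun t => Real.exp (c * t) * (d'.map fun k => bernFactor k t).prod) :=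
    Phi_contDiff c d' hd' ∞
  have hF1 : ContDiff ℝ (n : ℕ∞) (fun t =>
      Real.exp ((s + (d.sum : ℝ)) * t) * (d.map fun k => bernFactor k t).prod) :=
    Phi_contDiff _ d hd _
  have hF2 : ContDiff ℝ (n : ℕ∞) (fun t =>
      Real.exp ((s - (dm : ℝ) + (d.sum : ℝ)) * t) * (d.map fun k => bernFactor k t).prod) :=
    Phi_contDiff _ d hd _
  have hderiv : bernHO d n (s + (d.sum : ℝ)) - bernHO d n (s - (dm : ℝ) + (d.sum : ℝ))
      = (dm : ℝ) * ((n : ℝ) * bernHO d' n' (c)) := by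
    rw [bernHO, bernHO, ← itd_sub hF1 hF2 0]
    have : (fun t : ℝ =>
        Real.exp ((s + (d.sum : ℝ)) * t) * ((d.map fun k => bernFactor k t).prod)
          - Real.exp ((s - (dm : ℝ) + (d.sum : ℝ)) * t) * ((d.map fun k => bernFactor k t).prod))
        = fun t => (dm : ℝ) *
            (t * (Real.exp (c * t) * ((d'.map fun k => bernFactor k t).prod))) :=
      funext key
    have hxH : ContDiff ℝ (n : ℕ∞) (fun t : ℝ =>
        t * (Real.exp (c * t) * ((d'.map fun k => bernFactor k t).prod))) :=
      contDiff_id.mul (hH.of_le (WithTop.coe_le_coe.mpr le_top))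
    rw [this, itd_cmul hxH _ 0, itd_id_mul n _ hH]
    simp only [zero_mul, add_zero, mul_zero]
    rw [bernHO]
    have : n - 1 = n' := by omega
    rw [this]
  -- final arithmetic
  have hlen' : d'.length - 1 = n' := by omega
  rw [W₁, W₁, W₁, hlen', ← hndef]
  have harg : s - (dm : ℝ) + (d.sum : ℝ) = c := by rw [hsum, Nat.cast_add]; ring
  have harg' : s + (d'.sum : ℝ) = c := rfl
  rw [div_sub_div_same, harg, harg']
  rw [harg] at hderiv
  rw [hderiv]
  have hfac : (n.factorial : ℝ) = (n : ℝ) * (n'.factorial : ℝ) := by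
    rw [hnn]; push_cast [Nat.factorial_succ]; ring
  have hprodR : (d.prod : ℝ) = (d'.prod : ℝ) * (dm : ℝ) := by rw [hprod]; push_cast; ring
  have hdmne : (dm : ℝ) ≠ 0 := Nat.cast_ne_zero.mpr hdm.ne'
  have hnne : (n : ℝ) ≠ 0 := by rw [hnn]; push_cast; positivity
  have hfacne : (n'.factorial : ℝ) ≠ 0 := Nat.cast_ne_zero.mpr n'.factorial_ne_zero
  have hpne : (d'.prod : ℝ) ≠ 0 := by
    have : 0 < d'.prod := List.prod_pos hd'
    exact Nat.cast_ne_zero.mpr this.ne'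
  rw [hfac, hprodR, div_eq_div_iff
    (mul_ne_zero (mul_ne_zero hnne hfacne) (mul_ne_zero hpne hdmne))
    (mul_ne_zero hfacne hpne)]
  ring
end

section
/- Let d = (d_1, …, d_m) be a finite list of positive integers with m ≥ 1 and let ρ be a complex number with ρ^{d_i} ≠ 1 for all i. Then for every natural number n and every complex number s, the generalized Euler polynomials of higher order satisfy the recursion H_n^{(m)}(s + d_m, ρ | (d_1, …, d_m)) − ρ^{d_m} H_n^{(m)}(s, ρ | (d_1, …, d_m)) = (1 − ρ^{d_m}) H_n^{(m−1)}(s, ρ | (d_1, …, d_{m−1})), where for m = 1 the right-hand side uses the convention H_n^{(0)}(s, ρ | ()) = s^n (the generating function with an empty product). -/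
/-- The generalized Euler (Frobenius) polynomial of higher order `H_n^{(m)}(s, ρ | d)`,
defined as the `n`-th complex derivative at `t = 0` of
`t ↦ e^{st} ∏_i (1 - ρ^{d_i})/(e^{d_i t} - ρ^{d_i})`. -/
noncomputable def frobHO (d : List ℕ) (n : ℕ) (ρ : ℂ) (s : ℂ) : ℂ :=
  iteratedDeriv n
    (fun t : ℂ => Complex.exp (s * t) *
      (d.map fun k => (1 - ρ ^ k) / (Complex.exp ((k : ℂ) * t) - ρ ^ k)).prod) 0

lemma frobHO_aux_eq (l : List ℕ) (n : ℕ) (ρ σ : ℂ) : frobHO l n ρ σ =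
    iteratedDeriv n (fun t : ℂ => Complex.exp (σ * t) *
      (l.map fun j : ℕ => (1 - ρ ^ j) / (Complex.exp ((j : ℂ) * t) - ρ ^ j)).prod) 0 := by
  unfold frobHO
  congr 1
  funext t
  congr 1
  induction l with
  | nil => simp
  | cons a l ih => simp_all [Complex.cpow_natCast]

lemma frobHO_aux_iteratedDeriv_eq_within (n : ℕ) (f : ℂ → ℂ) {U : Set ℂ} (hU : IsOpen U)
    {x : ℂ} (hx : x ∈ U) : iteratedDeriv n f x = iteratedDerivWithin n f U x := by
  rw [iteratedDeriv, iteratedDerivWithin, iteratedFDerivWithin_of_isOpen n hU hx]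

theorem frobHO_recursion
    (d : List ℕ) (hd : ∀ x ∈ d, 0 < x) (hne : d ≠ [])
    (ρ : ℂ) (hρ : ∀ x ∈ d, ρ ^ x ≠ 1) (n : ℕ) (s : ℂ) :
    frobHO d n ρ (s + (d.getLast hne : ℂ)) -
        ρ ^ d.getLast hne * frobHO d n ρ s =
      (1 - ρ ^ d.getLast hne) * frobHO d.dropLast n ρ s := by
  classical
  set k := d.getLast hne with hk
  have hkmem : k ∈ d := List.getLast_mem hne
  set U : Set ℂ := {t : ℂ | ∀ j ∈ d, Complex.exp ((j : ℂ) * t) - ρ ^ j ≠ 0} with hUdef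
  have hU : IsOpen U := by
    have : U = ⋂ j ∈ {j | j ∈ d}, {t : ℂ | Complex.exp ((j : ℂ) * t) - ρ ^ j ≠ 0} := by
      ext t; simp [hUdef]
    rw [this]
    refine (List.finite_toSet d).isOpen_biInter (fun j hj => ?_)
    have hc : Continuous fun t : ℂ => Complex.exp ((j : ℂ) * t) - ρ ^ j := by
      continuity
    exact isOpen_compl_singleton.preimage hc
  have h0 : (0 : ℂ) ∈ U := by
    intro j hj
    simp only [mul_zero, Complex.exp_zero]
    exact sub_ne_zero.mpr (fun h => hρ j hj h.symm)
  have hUdiff : UniqueDiffOn ℂ U := hU.uniqueDiffOn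
  -- ContDiffOn of the factors
  have hprod : ∀ l : List ℕ, (∀ j ∈ l, j ∈ d) →
      ContDiffOn ℂ n (fun t : ℂ =>
        (l.map fun j : ℕ => (1 - ρ ^ j) / (Complex.exp ((j : ℂ) * t) - ρ ^ j)).prod) U := by
    intro l
    induction l with
    | nil =>
      intro _
      simp only [List.map_nil, List.prod_nil]
      exact contDiffOn_const
    | cons a l ih =>
      intro hl
      simp only [List.map_cons, List.prod_cons]
      refine ContDiffOn.mul ?_ (ih fun j hj => hl j (List.mem_cons_of_mem _ hj))
      refine ContDiffOn.div contDiffOn_const ?_ ?_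
      · exact ((Complex.contDiff_exp.comp (contDiff_const.mul contDiff_id)).sub
          contDiff_const).contDiffOn
      · intro t ht
        exact ht a (hl a List.mem_cons_self)
  have hexp : ∀ σ : ℂ, ContDiffOn ℂ n (fun t : ℂ => Complex.exp (σ * t)) U :=
    fun σ => ((Complex.contDiff_exp.comp (contDiff_const.mul contDiff_id))).contDiffOn
  have hF : ∀ (σ : ℂ) (l : List ℕ), (∀ j ∈ l, j ∈ d) →
      ContDiffOn ℂ n (fun t : ℂ => Complex.exp (σ * t) *
        (l.map fun j : ℕ => (1 - ρ ^ j) / (Complex.exp ((j : ℂ) * t) - ρ ^ j)).prod) U :=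
    fun σ l hl => (hexp σ).mul (hprod l hl)
  have hd2 : ∀ j ∈ d.dropLast, j ∈ d := fun j hj => (d.dropLast_sublist).subset hj
  have hdd : ∀ j ∈ d, j ∈ d := fun j hj => hj
  -- pointwise identity on U
  have hEq : Set.EqOn
      (fun t : ℂ => Complex.exp ((s + (k : ℂ)) * t) *
        (d.map fun j : ℕ => (1 - ρ ^ j) / (Complex.exp ((j : ℂ) * t) - ρ ^ j)).prod)
      ((fun t : ℂ => ρ ^ k * (Complex.exp (s * t) *
          (d.map fun j : ℕ => (1 - ρ ^ j) / (Complex.exp ((j : ℂ) * t) - ρ ^ j)).prod)) +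
        fun t : ℂ => (1 - ρ ^ k) * (Complex.exp (s * t) *
          (d.dropLast.map fun j : ℕ => (1 - ρ ^ j) / (Complex.exp ((j : ℂ) * t) - ρ ^ j)).prod)) U := by
    intro t ht
    have hsplit : d.dropLast ++ [k] = d := List.dropLast_append_getLast hne
    have hP : (d.map fun j : ℕ => (1 - ρ ^ j) / (Complex.exp ((j : ℂ) * t) - ρ ^ j)).prod =
        (d.dropLast.map fun j : ℕ => (1 - ρ ^ j) / (Complex.exp ((j : ℂ) * t) - ρ ^ j)).prod *
          ((1 - ρ ^ k) / (Complex.exp ((k : ℂ) * t) - ρ ^ k)) := by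
      conv_lhs => rw [← hsplit]
      simp
    have hden : Complex.exp ((k : ℂ) * t) - ρ ^ k ≠ 0 := ht k hkmem
    have hexpadd : Complex.exp ((s + (k : ℂ)) * t) =
        Complex.exp (s * t) * Complex.exp ((k : ℂ) * t) := by
      rw [← Complex.exp_add]; ring_nf
    simp only [Pi.add_apply, hP, hexpadd]
    generalize (d.dropLast.map fun j : ℕ => (1 - ρ ^ j) / (Complex.exp ((j : ℂ) * t) - ρ ^ j)).prod = P
    generalize Complex.exp ((k : ℂ) * t) = E at hden ⊢
    field_simp
    ring
  -- rewrite iterated derivatives within U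
  have key : ∀ (σ : ℂ) (l : List ℕ), frobHO l n ρ σ = iteratedDerivWithin n
      (fun t : ℂ => Complex.exp (σ * t) *
        (l.map fun j : ℕ => (1 - ρ ^ j) / (Complex.exp ((j : ℂ) * t) - ρ ^ j)).prod) U 0 :=
    by
    intro σ l
    rw [frobHO_aux_eq]
    exact frobHO_aux_iteratedDeriv_eq_within n _ hU h0
  rw [key, key, key]
  rw [iteratedDerivWithin_congr hEq h0]
  rw [iteratedDerivWithin_add (hx := h0) (h := hUdiff)
    ((contDiffOn_const.mul (hF s d hdd)).contDiffWithinAt h0)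
    ((contDiffOn_const.mul (hF s d.dropLast hd2)).contDiffWithinAt h0)]
  rw [iteratedDerivWithin_const_mul (hx := h0) (h := hUdiff) _ ((hF s d hdd).contDiffWithinAt h0),
    iteratedDerivWithin_const_mul (hx := h0) (h := hUdiff) _ ((hF s d.dropLast hd2).contDiffWithinAt h0)]
  ring
end
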